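/- arXiv:1808.02740 — 4 statements merged into one kernel-verified Lean document; each statement's English description precedes it below -/
import Mathlib

section
/- For any digraph D of order n and integer k with 2 ≤ k ≤ n−1, the strong subgraph (k+1)-connectivity parameter satisfies λ_{k+1}(D) ≤ λ_k(D). -/
open Relation Set

variable {V : Type*}

/-- Reachability in a digraph using only arcs from the arc set `B`. -/
def ArcReach (B : Set (V × V)) : V → V → Prop :=
  Relation.ReflTransGen (fun x y => (x, y) ∈ B)

/-- A digraph, given by its arc set on vertex type `V`, is strongly connected. -/
def IsStrong (A : Set (V × V)) : Prop :=
  ∀ u v : V, ArcReach A u v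

/-- `(W, B)` is an `S`-strong subgraph of the digraph with arc set `A`:
a strongly connected subdigraph whose vertex set contains `S`. -/
def SStrongSub (A : Set (V × V)) (S W : Set V) (B : Set (V × V)) : Prop :=
  B ⊆ A ∧ S ⊆ W ∧ (∀ e ∈ B, e.1 ∈ W ∧ e.2 ∈ W) ∧
    ∀ u ∈ W, ∀ v ∈ W, ArcReach B u v

/-- `λ_S(D)`: the maximum number of pairwise arc-disjoint `S`-strong subgraphs. -/
noncomputable def lamS (A : Set (V × V)) (S : Set V) : ℕ :=
  sSup {t | ∃ (W : Fin t → Set V) (B : Fin t → Set (V × V)),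
    (∀ i, SStrongSub A S (W i) (B i)) ∧
    ∀ i j, i ≠ j → Disjoint (B i) (B j)}

/-- `κ_S(D)`: the maximum number of pairwise internally disjoint
(arc-disjoint, vertex sets meeting exactly in `S`) `S`-strong subgraphs. -/
noncomputable def kapS (A : Set (V × V)) (S : Set V) : ℕ :=
  sSup {t | ∃ (W : Fin t → Set V) (B : Fin t → Set (V × V)),
    (∀ i, SStrongSub A S (W i) (B i)) ∧
    (∀ i j, i ≠ j → Disjoint (B i) (B j)) ∧
    ∀ i j, i ≠ j → W i ∩ W j = S}

/-- Strong subgraph `k`-arc-connectivity `λ_k(D)`. -/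
noncomputable def lamK [Fintype V] (A : Set (V × V)) (k : ℕ) : ℕ :=
  sInf {m | ∃ S : Finset V, S.card = k ∧ m = lamS A ↑S}

/-- Strong subgraph `k`-connectivity `κ_k(D)`. -/
noncomputable def kapK [Fintype V] (A : Set (V × V)) (k : ℕ) : ℕ :=
  sInf {m | ∃ S : Finset V, S.card = k ∧ m = kapS A ↑S}

/-
Enlarging the terminal set `S` only shrinks the family of `S`-strong subgraphs, so `λ_S` is
antitone in `S`. Given a `k`-set `S` attaining `λ_k(D)` and a vertex `v ∉ S` (which exists as
`k < n`), we get `λ_{k+1}(D) ≤ λ_{S ∪ {v}}(D) ≤ λ_S(D) = λ_k(D)`. The only care needed is with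
`sSup` on `ℕ`: the packing numbers are bounded because for `|S| ≥ 2` every `S`-strong subgraph
has an arc, so arc-disjoint ones are at most `|V × V|` many.
-/

/-- `lamS A S` is definitionally `sSup (packingSizes A S)`. -/
def packingSizes (A : Set (V × V)) (S : Set V) : Set ℕ :=
  {t | ∃ (W : Fin t → Set V) (B : Fin t → Set (V × V)),
    (∀ i, SStrongSub A S (W i) (B i)) ∧
    ∀ i j, i ≠ j → Disjoint (B i) (B j)}

theorem zero_mem_packingSizes (A : Set (V × V)) (S : Set V) : 0 ∈ packingSizes A S :=
  ⟨Fin.elim0, Fin.elim0, fun i => i.elim0, fun i => i.elim0⟩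

theorem SStrongSub.mono_terminals {A : Set (V × V)} {S T W : Set V} {B : Set (V × V)}
    (hST : S ⊆ T) (h : SStrongSub A T W B) : SStrongSub A S W B :=
  ⟨h.1, hST.trans h.2.1, h.2.2⟩

theorem packingSizes_anti (A : Set (V × V)) {S T : Set V} (hST : S ⊆ T) :
    packingSizes A T ⊆ packingSizes A S := by
  rintro t ⟨W, B, hstrong, hdisj⟩
  exact ⟨W, B, fun i => (hstrong i).mono_terminals hST, hdisj⟩

theorem SStrongSub.arcs_nonempty {A : Set (V × V)} {S W : Set V} {B : Set (V × V)}
    (h : SStrongSub A S W B) (hS : S.Nontrivial) : B.Nonempty := by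
  obtain ⟨a, ha, b, hb, hab⟩ := hS
  obtain ⟨-, hSW, -, hreach⟩ := h
  rcases ReflTransGen.cases_head (hreach a (hSW ha) b (hSW hb)) with rfl | ⟨c, hac, -⟩
  · exact absurd rfl hab
  · exact ⟨(a, c), hac⟩

theorem le_card_of_mem_packingSizes [Fintype V] {A : Set (V × V)} {S : Set V}
    (hS : S.Nontrivial) {t : ℕ} (ht : t ∈ packingSizes A S) : t ≤ Fintype.card (V × V) := by
  obtain ⟨W, B, hstrong, hdisj⟩ := ht
  choose e he using fun i => (hstrong i).arcs_nonempty hS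
  have he_inj : Function.Injective e := fun i j hij => by
    by_contra hne
    exact (hdisj i j hne).ne_of_mem (he i) (hij ▸ he j) rfl
  simpa using Fintype.card_le_of_injective e he_inj

theorem lamS_anti [Fintype V] (A : Set (V × V)) {S T : Set V} (hS : S.Nontrivial)
    (hST : S ⊆ T) : lamS A T ≤ lamS A S :=
  csSup_le_csSup ⟨_, fun _ => le_card_of_mem_packingSizes hS⟩
    ⟨0, zero_mem_packingSizes A T⟩ (packingSizes_anti A hST)

theorem lamK_le_lamS [Fintype V] (A : Set (V × V)) {S : Finset V} {k : ℕ} (hS : S.card = k) :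
    lamK A k ≤ lamS A S :=
  Nat.sInf_le ⟨S, hS, rfl⟩

theorem exists_lamS_eq_lamK [Fintype V] (A : Set (V × V)) {k : ℕ}
    (hk : k ≤ Fintype.card V) : ∃ S : Finset V, S.card = k ∧ lamS A S = lamK A k := by
  obtain ⟨S, -, hS⟩ := Finset.exists_subset_card_eq (s := Finset.univ) (n := k) (by simpa)
  obtain ⟨S, hcard, hval⟩ := Nat.sInf_mem (⟨lamS A S, S, hS, rfl⟩ :
    {m | ∃ S : Finset V, S.card = k ∧ m = lamS A ↑S}.Nonempty)
  exact ⟨S, hcard, hval.symm⟩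

/-- For a digraph of order `n` and `2 ≤ k ≤ n − 1`,
`λ_{k+1}(D) ≤ λ_k(D)`. -/
theorem lamK_succ_le {V : Type*} [Fintype V] (A : Set (V × V)) (n k : ℕ)
    (hn : Fintype.card V = n) (h2 : 2 ≤ k) (hk : k ≤ n - 1) :
    lamK A (k + 1) ≤ lamK A k := by
  classical
  obtain ⟨S, hcard, hS⟩ := exists_lamS_eq_lamK A (k := k) (by omega)
  obtain ⟨v, -, hv⟩ : ∃ v ∈ (Finset.univ : Finset V), v ∉ S :=
    Finset.exists_mem_notMem_of_card_lt_card (by rw [Finset.card_univ]; omega)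
  have hS_nontrivial : (S : Set V).Nontrivial :=
    Finset.one_lt_card_iff_nontrivial.mp (by omega)
  calc lamK A (k + 1) ≤ lamS A ↑(insert v S) :=
        lamK_le_lamS A (by rw [Finset.card_insert_of_notMem hv, hcard])
    _ ≤ lamS A S := lamS_anti A hS_nontrivial (by simp)
    _ = lamK A k := hS
end

section
/- For every undirected graph G and integer k ≥ 2, λ_k(G⃡) ≥ λ_k(G), where λ_k(G) is the generalized k-edge-connectivity of G. In particular, λ_2(G⃡) = λ(G), the edge-connectivity of G. -/
open Relation Set

variable {V : Type*}

/-- The generalized local edge-connectivity `λ_S(G)` of an undirected graph: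
the maximum number of pairwise edge-disjoint `S`-trees. -/
noncomputable def treeLamS {V : Type*} (G : SimpleGraph V) (S : Set V) : ℕ :=
  sSup {t | ∃ H : Fin t → G.Subgraph,
    (∀ i, S ⊆ (H i).verts ∧ (H i).coe.IsTree) ∧
    ∀ i j, i ≠ j → Disjoint (H i).edgeSet (H j).edgeSet}

/-- The generalized `k`-edge-connectivity `λ_k(G)` of an undirected graph. -/
noncomputable def treeLamK {V : Type*} [Fintype V] (G : SimpleGraph V) (k : ℕ) : ℕ :=
  sInf {m | ∃ S : Finset V, S.card = k ∧ m = treeLamS G ↑S}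

/-- The edge-connectivity `λ(G)` of an undirected graph. -/
noncomputable def edgeConn {V : Type*} [Fintype V] (G : SimpleGraph V) : ℕ :=
  sInf {m | ∃ F : Finset (Sym2 V), ↑F ⊆ G.edgeSet ∧ F.card = m ∧
    ¬ (G.deleteEdges ↑F).Connected}

/-!
A tree `T` of `G` containing `S`, with each edge replaced by both of its arcs, is a strong
subdigraph of `G⃡` containing `S`, and edge-disjoint trees give arc-disjoint subdigraphs; this
gives `λ_k(G) ≤ λ_k(G⃡)`.

For `k = 2` and `S = {u, v}`: if deleting a set `F` of edges separates `u` from `v`, every strong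
subdigraph through `u` and `v` needs an arc leaving the side of `u`, and such arcs lie over `F`;
so `λ_S(G⃡) ≤ λ(G)`. Conversely, by the edge version of Menger's theorem (proved here with unit
flows: Ford–Fulkerson augmentation, then path decomposition) `G` has `λ(G)` edge-disjoint
`u`-`v` paths, and each of them, traversed both ways, is a strong subdigraph through `u` and `v`.
-/

lemma Nat.sInf_le_sInf_of_forall_le {ι : Type*} {P : ι → Prop} {f g : ι → ℕ}
    (h : ∀ i, P i → f i ≤ g i) :
    sInf {m | ∃ i, P i ∧ m = f i} ≤ sInf {m | ∃ i, P i ∧ m = g i} := by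
  by_cases hP : ∃ i, P i
  · obtain ⟨i, hi⟩ := hP
    refine le_csInf ⟨g i, i, hi, rfl⟩ ?_
    rintro _ ⟨j, hj, rfl⟩
    exact (Nat.sInf_le (s := {m | ∃ i, P i ∧ m = f i}) ⟨j, hj, rfl⟩).trans (h j hj)
  · have hempty : {m | ∃ i, P i ∧ m = f i} = ∅ := by
      refine Set.eq_empty_of_forall_notMem ?_
      rintro _ ⟨i, hi, -⟩
      exact hP ⟨i, hi⟩
    rw [hempty, Nat.sInf_empty]
    exact Nat.zero_le _

lemma Fin.pairwise_cons {α : Type*} {r : α → α → Prop} (hr : ∀ ⦃x y⦄, r x y → r y x) {n : ℕ}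
    {a : α} {f : Fin n → α} (ha : ∀ i, r a (f i)) (hf : Pairwise (Function.onFun r f)) :
    Pairwise (Function.onFun r (Fin.cons a f : Fin (n + 1) → α)) := by
  intro i j hij
  induction i using Fin.cases with
  | zero =>
    induction j using Fin.cases with
    | zero => exact absurd rfl hij
    | succ j => exact ha j
  | succ i =>
    induction j using Fin.cases with
    | zero => exact hr (ha i)
    | succ j => exact hf fun h => hij (congrArg Fin.succ h)

lemma Relation.ReflTransGen.exists_crossing {r : V → V → Prop} {X : Set V} {a b : V}
    (h : ReflTransGen r a b) (ha : a ∈ X) (hb : b ∉ X) : ∃ x ∈ X, ∃ y ∉ X, r x y := by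
  induction h with
  | refl => exact absurd ha hb
  | @tail c d _ hcd ih =>
    by_cases hc : c ∈ X
    · exact ⟨c, hc, d, hb, hcd⟩
    · exact ih hc

section StrongSubgraphs

variable [Finite V] {A : Set (V × V)} {S : Set V} {a b : V}

/-- Each member of the family has an arc leaving `X`, and these arcs are distinct. -/
lemma card_le_ncard_of_sStrongSub {X : Set V} (ha : a ∈ S) (haX : a ∈ X) (hb : b ∈ S)
    (hbX : b ∉ X) {t : ℕ} {W : Fin t → Set V} {B : Fin t → Set (V × V)}
    (hB : ∀ i, SStrongSub A S (W i) (B i)) (hdisj : ∀ i j, i ≠ j → Disjoint (B i) (B j)) :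
    t ≤ {q ∈ A | q.1 ∈ X ∧ q.2 ∉ X}.ncard := by
  have hcross : ∀ i, ∃ q ∈ B i, q.1 ∈ X ∧ q.2 ∉ X := fun i => by
    obtain ⟨x, hx, y, hy, hxy⟩ :=
      ((hB i).2.2.2 a ((hB i).2.1 ha) b ((hB i).2.1 hb)).exists_crossing haX hbX
    exact ⟨(x, y), hxy, hx, hy⟩
  choose g hgB hgX using hcross
  have hinj : Function.Injective g := fun i j hij => by
    by_contra hne
    exact Set.disjoint_left.1 (hdisj i j hne) (hgB i) (hij ▸ hgB j)
  calc t = (Set.range g).ncard := by rw [Set.ncard_range_of_injective hinj, Nat.card_fin]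
    _ ≤ {q ∈ A | q.1 ∈ X ∧ q.2 ∉ X}.ncard :=
      Set.ncard_le_ncard (Set.range_subset_iff.2 fun i => ⟨(hB i).1 (hgB i), hgX i⟩)

lemma lamS_le_ncard {X : Set V} (ha : a ∈ S) (haX : a ∈ X) (hb : b ∈ S) (hbX : b ∉ X) :
    lamS A S ≤ {q ∈ A | q.1 ∈ X ∧ q.2 ∉ X}.ncard := by
  refine csSup_le ⟨0, Fin.elim0, Fin.elim0, fun i => i.elim0, fun i => i.elim0⟩ ?_
  rintro _ ⟨_, _, hB, hdisj⟩
  exact card_le_ncard_of_sStrongSub ha haX hb hbX hB hdisj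

lemma le_lamS (ha : a ∈ S) (hb : b ∈ S) (hab : a ≠ b) {t : ℕ} {W : Fin t → Set V}
    {B : Fin t → Set (V × V)} (hB : ∀ i, SStrongSub A S (W i) (B i))
    (hdisj : ∀ i j, i ≠ j → Disjoint (B i) (B j)) :
    t ≤ lamS A S :=
  le_csSup ⟨_, fun _ ⟨_, _, hB, hdisj⟩ =>
      card_le_ncard_of_sStrongSub ha (Set.mem_singleton a) hb hab.symm hB hdisj⟩
    ⟨W, B, hB, hdisj⟩

end StrongSubgraphs

namespace SimpleGraph

variable {G : SimpleGraph V}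

section Walks

variable {a b : V}

lemma Walk.of_mem_map_toProd_darts {P : V → V → Prop} {p : G.Walk a b}
    (h : ∀ d ∈ p.darts, P d.fst d.snd) {x y : V} (hxy : (x, y) ∈ p.darts.map Dart.toProd) :
    P x y := by
  obtain ⟨d, hd, hdxy⟩ := List.mem_map.1 hxy
  simpa [hdxy] using h d hd

lemma Walk.toSubgraph_adj_iff_mem_darts (p : G.Walk a b) {x y : V} :
    p.toSubgraph.Adj x y ↔
      (x, y) ∈ p.darts.map Dart.toProd ∨ (y, x) ∈ p.darts.map Dart.toProd := by
  rw [← Subgraph.mem_edgeSet, Walk.mem_edges_toSubgraph, Walk.edges_eq_map_darts]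
  simp only [List.mem_map, dart_edge_eq_mk'_iff]
  grind

lemma Walk.nodup_map_toProd_darts {p : G.Walk a b} (hp : p.IsPath) :
    (p.darts.map Dart.toProd).Nodup :=
  (Walk.darts_nodup_of_support_nodup hp.support_nodup).map Dart.toProd_injective

lemma exists_isPath_of_reflTransGen {P : V → V → Prop}
    (h : ReflTransGen (fun x y => G.Adj x y ∧ P x y) a b) :
    ∃ p : G.Walk a b, p.IsPath ∧ ∀ d ∈ p.darts, P d.fst d.snd := by
  classical
  suffices ∃ p : G.Walk a b, ∀ d ∈ p.darts, P d.fst d.snd by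
    obtain ⟨p, hp⟩ := this
    exact ⟨p.bypass, p.bypass_isPath, fun d hd => hp d (p.darts_bypass_subset_darts hd)⟩
  induction h with
  | refl => exact ⟨.nil, by simp⟩
  | tail _ hbc ih =>
    obtain ⟨p, hp⟩ := ih
    refine ⟨p.concat hbc.1, fun d hd => ?_⟩
    rw [Walk.darts_concat, List.concat_eq_append, List.mem_append, List.mem_singleton] at hd
    rcases hd with hd | rfl
    exacts [hp d hd, hbc.2]

lemma not_reachable_deleteEdges_of_forall_adj {T : Set V} {F : Set (Sym2 V)}
    (hF : ∀ x ∈ T, ∀ y ∉ T, G.Adj x y → s(x, y) ∈ F) (ha : a ∈ T) (hb : b ∉ T) :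
    ¬(G.deleteEdges F).Reachable a b := by
  rintro ⟨p⟩
  obtain ⟨d, -, hd₁, hd₂⟩ := p.exists_boundary_dart T ha hb
  have hadj := d.adj
  rw [deleteEdges_adj] at hadj
  exact hadj.2 (hF _ hd₁ _ hd₂ hadj.1)

end Walks

section WalkFlow

variable [DecidableEq V] {a b : V}

def Walk.flow (p : G.Walk a b) (x y : V) : ℤ :=
  (p.darts.map Dart.toProd).count (x, y) - (p.darts.map Dart.toProd).count (y, x)

lemma Walk.flow_cons {c : V} (h : G.Adj a c) (p : G.Walk c b) (x y : V) :
    (Walk.cons h p).flow x y =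
      p.flow x y + ((if a = x ∧ c = y then 1 else 0) - if a = y ∧ c = x then 1 else 0) := by
  simp only [Walk.flow, Walk.darts_cons, List.map_cons, List.count_cons, beq_iff_eq,
    Prod.mk.injEq]
  push_cast
  ring

lemma Walk.flow_antisymm (p : G.Walk a b) (x y : V) : p.flow y x = -p.flow x y := by
  simp only [Walk.flow]
  ring

lemma Walk.mem_darts_of_flow_pos {p : G.Walk a b} {x y : V} (h : 0 < p.flow x y) :
    (x, y) ∈ p.darts.map Dart.toProd := by
  rw [← List.count_pos_iff]
  unfold Walk.flow at h
  omega

lemma Walk.IsPath.flow_le_one {p : G.Walk a b} (hp : p.IsPath) (x y : V) : p.flow x y ≤ 1 := by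
  have := List.nodup_iff_count_le_one.1 (Walk.nodup_map_toProd_darts hp) (x, y)
  unfold Walk.flow
  omega

lemma Walk.flow_eq_zero_of_not_adj (p : G.Walk a b) {x y : V} (h : ¬p.toSubgraph.Adj x y) :
    p.flow x y = 0 := by
  rw [Walk.toSubgraph_adj_iff_mem_darts, not_or, ← List.count_eq_zero,
    ← List.count_eq_zero] at h
  simp [Walk.flow, h]

end WalkFlow

section UnitFlow

variable [Fintype V] {s t : V} {φ : V → V → ℤ}

def netOut (φ : V → V → ℤ) (x : V) : ℤ := ∑ y, φ x y

lemma netOut_add (φ ψ : V → V → ℤ) (x : V) : netOut (φ + ψ) x = netOut φ x + netOut ψ x :=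
  Finset.sum_add_distrib

lemma netOut_sub (φ ψ : V → V → ℤ) (x : V) : netOut (φ - ψ) x = netOut φ x - netOut ψ x :=
  Finset.sum_sub_distrib _ _

/-- An `s`-`t` flow on the edges of `G`, each of capacity one, in the skew-symmetric convention:
`φ x y = 1` means one unit crosses the edge `xy` from `x` to `y`. -/
structure IsUnitFlow (G : SimpleGraph V) (s t : V) (φ : V → V → ℤ) : Prop where
  antisymm : ∀ x y, φ y x = -φ x y
  le_one : ∀ x y, φ x y ≤ 1
  eq_zero_of_not_adj : ∀ x y, ¬G.Adj x y → φ x y = 0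
  netOut_eq_zero : ∀ x, x ≠ s → x ≠ t → netOut φ x = 0

lemma isUnitFlow_zero : IsUnitFlow G s t 0 :=
  ⟨fun _ _ => neg_zero.symm, fun _ _ => zero_le_one, fun _ _ _ => rfl,
    fun _ _ _ => Finset.sum_const_zero⟩

lemma IsUnitFlow.sum_cut_eq_netOut [DecidableEq V] (hφ : IsUnitFlow G s t φ) {T : Finset V}
    (hs : s ∈ T) (ht : t ∉ T) : ∑ x ∈ T, ∑ y ∈ Tᶜ, φ x y = netOut φ s := by
  have hinside : ∑ x ∈ T, ∑ y ∈ T, φ x y = 0 := by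
    have h : ∑ x ∈ T, ∑ y ∈ T, φ x y = -∑ x ∈ T, ∑ y ∈ T, φ x y :=
      calc ∑ x ∈ T, ∑ y ∈ T, φ x y = ∑ y ∈ T, ∑ x ∈ T, -φ y x := by
            rw [Finset.sum_comm]
            exact Finset.sum_congr rfl fun y _ => Finset.sum_congr rfl fun x _ => hφ.antisymm y x
        _ = -∑ x ∈ T, ∑ y ∈ T, φ x y := by simp only [Finset.sum_neg_distrib]
    linarith
  have hout : ∑ x ∈ T, netOut φ x = netOut φ s := by
    refine Finset.sum_eq_single_of_mem s hs fun x hx hxs => hφ.netOut_eq_zero x hxs ?_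
    rintro rfl
    exact ht hx
  rw [← hout]
  simp only [netOut]
  rw [Finset.sum_congr rfl fun x _ => (Finset.sum_add_sum_compl T (φ x)).symm,
    Finset.sum_add_distrib, hinside, zero_add]

section FlowAlongPath

variable [DecidableEq V]

lemma Walk.netOut_flow {a b : V} (p : G.Walk a b) (x : V) :
    netOut p.flow x = (if x = a then 1 else 0) - (if x = b then 1 else 0) := by
  induction p with
  | nil =>
    simp only [netOut, Walk.flow, Walk.darts_nil, List.map_nil, List.count_nil, sub_self,
      Finset.sum_const_zero]
  | @cons a c b h p ih =>
    have hout : ∀ z w : V, ∑ y, (if z = x ∧ w = y then (1 : ℤ) else 0) =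
        if z = x then 1 else 0 := fun z w => by
      rw [Finset.sum_eq_single w (fun y _ hy => by simp [Ne.symm hy]) (by simp)]
      simp
    have hin : ∀ z w : V, ∑ y, (if z = y ∧ w = x then (1 : ℤ) else 0) =
        if w = x then 1 else 0 := fun z w => by
      rw [Finset.sum_eq_single z (fun y _ hy => by simp [Ne.symm hy]) (by simp)]
      simp
    simp only [netOut] at ih ⊢
    simp only [Walk.flow_cons, Finset.sum_add_distrib, Finset.sum_sub_distrib, ih, hout, hin]
    grind

lemma IsUnitFlow.add_flow (hφ : IsUnitFlow G s t φ) {p : G.Walk s t} (hp : p.IsPath)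
    (hres : ∀ d ∈ p.darts, φ d.fst d.snd ≤ 0) : IsUnitFlow G s t (φ + p.flow) where
  antisymm x y := by
    simp only [Pi.add_apply, hφ.antisymm x y, p.flow_antisymm x y]
    ring
  le_one x y := by
    have := hp.flow_le_one x y
    by_cases hpos : 0 < p.flow x y
    · have := p.of_mem_map_toProd_darts (P := fun x y => φ x y ≤ 0) hres
        (Walk.mem_darts_of_flow_pos hpos)
      simp only [Pi.add_apply]
      omega
    · have := hφ.le_one x y
      simp only [Pi.add_apply]
      omega
  eq_zero_of_not_adj x y hxy := by
    simp only [Pi.add_apply, hφ.eq_zero_of_not_adj x y hxy,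
      p.flow_eq_zero_of_not_adj fun h => hxy h.adj_sub, add_zero]
  netOut_eq_zero x hxs hxt := by
    rw [netOut_add, hφ.netOut_eq_zero x hxs hxt, p.netOut_flow, if_neg hxs, if_neg hxt]
    simp

lemma netOut_add_flow (hst : s ≠ t) (p : G.Walk s t) :
    netOut (φ + p.flow) s = netOut φ s + 1 := by
  rw [netOut_add, p.netOut_flow, if_pos rfl, if_neg hst, sub_zero]

lemma IsUnitFlow.flow_eq_of_adj (hφ : IsUnitFlow G s t φ) {p : G.Walk s t} (hp : p.IsPath)
    (hsat : ∀ d ∈ p.darts, φ d.fst d.snd = 1) {x y : V} (hxy : p.toSubgraph.Adj x y) :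
    p.flow x y = φ x y := by
  have key : ∀ {x y}, (x, y) ∈ p.darts.map Dart.toProd → p.flow x y = φ x y := by
    intro x y h
    have hφxy : φ x y = 1 := p.of_mem_map_toProd_darts (P := fun x y => φ x y = 1) hsat h
    have hyx : (y, x) ∉ p.darts.map Dart.toProd := fun h' => by
      have := hφ.antisymm x y
      rw [hφxy, p.of_mem_map_toProd_darts (P := fun x y => φ x y = 1) hsat h'] at this
      omega
    rw [Walk.flow, List.count_eq_one_of_mem (Walk.nodup_map_toProd_darts hp) h,
      List.count_eq_zero.2 hyx, hφxy]
    rfl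
  rcases p.toSubgraph_adj_iff_mem_darts.1 hxy with h | h
  · exact key h
  · rw [← neg_neg (p.flow x y), ← p.flow_antisymm, key h, ← hφ.antisymm]

lemma IsUnitFlow.sub_flow (hφ : IsUnitFlow G s t φ) {p : G.Walk s t} (hp : p.IsPath)
    (hsat : ∀ d ∈ p.darts, φ d.fst d.snd = 1) : IsUnitFlow G s t (φ - p.flow) where
  antisymm x y := by
    simp only [Pi.sub_apply, hφ.antisymm x y, p.flow_antisymm x y]
    ring
  le_one x y := by
    by_cases hxy : p.toSubgraph.Adj x y
    · rw [Pi.sub_apply, Pi.sub_apply, hφ.flow_eq_of_adj hp hsat hxy, sub_self]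
      exact zero_le_one
    · rw [Pi.sub_apply, Pi.sub_apply, p.flow_eq_zero_of_not_adj hxy, sub_zero]
      exact hφ.le_one x y
  eq_zero_of_not_adj x y hxy := by
    rw [Pi.sub_apply, Pi.sub_apply, p.flow_eq_zero_of_not_adj fun h => hxy h.adj_sub, sub_zero]
    exact hφ.eq_zero_of_not_adj x y hxy
  netOut_eq_zero x hxs hxt := by
    rw [netOut_sub, hφ.netOut_eq_zero x hxs hxt, p.netOut_flow, if_neg hxs, if_neg hxt]
    simp

lemma netOut_sub_flow (hst : s ≠ t) (p : G.Walk s t) :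
    netOut (φ - p.flow) s = netOut φ s - 1 := by
  rw [netOut_sub, p.netOut_flow, if_pos rfl, if_neg hst, sub_zero]

end FlowAlongPath

/-- With no augmenting path, the vertices reachable in the residual graph span a cut whose
edges are all saturated. -/
lemma IsUnitFlow.exists_cut_of_not_reflTransGen (hφ : IsUnitFlow G s t φ)
    (hnr : ¬ReflTransGen (fun x y => G.Adj x y ∧ φ x y ≤ 0) s t) :
    ∃ F : Finset (Sym2 V), ↑F ⊆ G.edgeSet ∧ ¬(G.deleteEdges ↑F).Reachable s t ∧
      (F.card : ℤ) ≤ netOut φ s := by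
  classical
  set T := Finset.univ.filter (ReflTransGen (fun x y => G.Adj x y ∧ φ x y ≤ 0) s)
  have hsT : s ∈ T := Finset.mem_filter.2 ⟨Finset.mem_univ _, .refl⟩
  have htT : t ∉ T := by simpa [T] using hnr
  have hsat : ∀ x ∈ T, ∀ y ∉ T, G.Adj x y → φ x y = 1 := by
    intro x hx y hy hxy
    by_contra hne
    simp only [T, Finset.mem_filter, Finset.mem_univ, true_and] at hx hy
    exact hy (hx.tail ⟨hxy, by have := hφ.le_one x y; omega⟩)
  set C := (T ×ˢ Tᶜ).filter fun q => G.Adj q.1 q.2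
  refine ⟨C.image fun q => s(q.1, q.2), ?_, ?_, ?_⟩
  · intro e he
    obtain ⟨q, hq, rfl⟩ := Finset.mem_image.1 (Finset.mem_coe.1 he)
    exact (Finset.mem_filter.1 hq).2
  · refine not_reachable_deleteEdges_of_forall_adj (T := ↑T) (fun x hx y hy hxy => ?_) hsT htT
    exact Finset.mem_image.2 ⟨(x, y), by simp_all [C], rfl⟩
  · have hC : ∑ q ∈ T ×ˢ Tᶜ, φ q.1 q.2 = C.card := by
      rw [Finset.natCast_card_filter]
      refine Finset.sum_congr rfl fun q hq => ?_
      rw [Finset.mem_product, Finset.mem_compl] at hq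
      split_ifs with hadj
      · exact hsat _ hq.1 _ hq.2 hadj
      · exact hφ.eq_zero_of_not_adj _ _ hadj
    calc ((C.image fun q => s(q.1, q.2)).card : ℤ) ≤ C.card := by
          exact_mod_cast Finset.card_image_le
      _ = netOut φ s := by rw [← hC, Finset.sum_product, hφ.sum_cut_eq_netOut hsT htT]

lemma IsUnitFlow.reflTransGen_of_netOut_pos (hφ : IsUnitFlow G s t φ) (hpos : 0 < netOut φ s) :
    ReflTransGen (fun x y => G.Adj x y ∧ φ x y = 1) s t := by
  classical
  by_contra hnr
  set T := Finset.univ.filter (ReflTransGen (fun x y => G.Adj x y ∧ φ x y = 1) s)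
  have hsT : s ∈ T := Finset.mem_filter.2 ⟨Finset.mem_univ _, .refl⟩
  have htT : t ∉ T := by simpa [T] using hnr
  have hcross : ∀ x ∈ T, ∀ y ∈ Tᶜ, φ x y ≤ 0 := by
    intro x hx y hy
    by_contra hne
    have h1 : φ x y = 1 := le_antisymm (hφ.le_one x y) (by omega)
    have hxy : G.Adj x y := by
      by_contra hxy
      rw [hφ.eq_zero_of_not_adj x y hxy] at h1
      exact zero_ne_one h1
    simp only [T, Finset.mem_compl, Finset.mem_filter, Finset.mem_univ, true_and] at hx hy
    exact hy (hx.tail ⟨hxy, h1⟩)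
  have := Finset.sum_nonpos fun x hx => Finset.sum_nonpos (hcross x hx)
  rw [hφ.sum_cut_eq_netOut hsT htT] at this
  omega

/-- Ford–Fulkerson: augment along residual paths until a cut certifies the flow value. -/
lemma exists_isUnitFlow_le_netOut (hst : s ≠ t) {k : ℕ}
    (hcut : ∀ F : Finset (Sym2 V), ↑F ⊆ G.edgeSet → ¬(G.deleteEdges ↑F).Reachable s t →
      k ≤ F.card) :
    ∃ φ, IsUnitFlow G s t φ ∧ (k : ℤ) ≤ netOut φ s := by
  classical
  suffices ∀ n ≤ k, ∃ φ, IsUnitFlow G s t φ ∧ (n : ℤ) ≤ netOut φ s from this k le_rfl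
  intro n
  induction n with
  | zero => exact fun _ => ⟨0, isUnitFlow_zero, by simp [netOut]⟩
  | succ n ih =>
    intro hn
    obtain ⟨φ, hφ, hval⟩ := ih (by omega)
    by_cases haug : ReflTransGen (fun x y => G.Adj x y ∧ φ x y ≤ 0) s t
    · obtain ⟨p, hp, hres⟩ := exists_isPath_of_reflTransGen haug
      refine ⟨φ + p.flow, hφ.add_flow hp hres, ?_⟩
      rw [netOut_add_flow hst]
      push_cast
      omega
    · obtain ⟨F, hFG, hF, hcard⟩ := hφ.exists_cut_of_not_reflTransGen haug
      have := hcut F hFG hF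
      exact ⟨φ, hφ, by omega⟩

/-- Path decomposition: peel off one saturated `s`-`t` path at a time. -/
lemma IsUnitFlow.exists_edgeDisjoint_subgraphs (hφ : IsUnitFlow G s t φ) (hst : s ≠ t) {n : ℕ}
    (hval : (n : ℤ) ≤ netOut φ s) :
    ∃ H : Fin n → G.Subgraph,
      (∀ i, (H i).Connected ∧ s ∈ (H i).verts ∧ t ∈ (H i).verts ∧
        ∀ x y, (H i).Adj x y → φ x y ≠ 0) ∧
      Pairwise fun i j => Disjoint (H i).edgeSet (H j).edgeSet := by
  classical
  induction n generalizing φ with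
  | zero => exact ⟨Fin.elim0, fun i => i.elim0, fun i => i.elim0⟩
  | succ n ih =>
    obtain ⟨p, hp, hsat⟩ :=
      exists_isPath_of_reflTransGen (hφ.reflTransGen_of_netOut_pos (by omega))
    obtain ⟨H, hH, hdisj⟩ := ih (hφ.sub_flow hp hsat)
      (by rw [netOut_sub_flow hst]; push_cast at hval; omega)
    have hpath : ∀ x y, p.toSubgraph.Adj x y → (φ - p.flow) x y = 0 := fun x y hxy => by
      rw [Pi.sub_apply, Pi.sub_apply, hφ.flow_eq_of_adj hp hsat hxy, sub_self]
    have hsupp : ∀ x y, (φ - p.flow) x y ≠ 0 → φ x y ≠ 0 := fun x y h => by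
      have hxy : ¬p.toSubgraph.Adj x y := fun hxy => h (hpath x y hxy)
      rwa [Pi.sub_apply, Pi.sub_apply, p.flow_eq_zero_of_not_adj hxy, sub_zero] at h
    refine ⟨Fin.cons p.toSubgraph H, Fin.forall_fin_succ.2 ⟨?_, fun i => ?_⟩,
      Fin.pairwise_cons (r := fun H H' : G.Subgraph => Disjoint H.edgeSet H'.edgeSet)
        (fun _ _ h => h.symm) (fun i => ?_) hdisj⟩
    · refine ⟨p.toSubgraph_connected, p.start_mem_verts_toSubgraph,
        p.end_mem_verts_toSubgraph, fun x y hxy => ?_⟩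
      have := hφ.antisymm x y
      rcases p.toSubgraph_adj_iff_mem_darts.1 hxy with h | h <;>
        rw [p.of_mem_map_toProd_darts (P := fun x y => φ x y = 1) hsat h] at * <;> omega
    · obtain ⟨hconn, hs, ht, hH⟩ := hH i
      exact ⟨hconn, hs, ht, fun x y hxy => hsupp x y (hH x y hxy)⟩
    · rw [Set.disjoint_left]
      intro e he he'
      induction e using Sym2.ind with
      | _ x y => exact (hH i).2.2.2 x y he' (hpath x y he)

theorem exists_edgeDisjoint_connected_subgraphs (hst : s ≠ t) {k : ℕ}
    (hcut : ∀ F : Finset (Sym2 V), ↑F ⊆ G.edgeSet → ¬(G.deleteEdges ↑F).Reachable s t →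
      k ≤ F.card) :
    ∃ H : Fin k → G.Subgraph, (∀ i, (H i).Connected ∧ s ∈ (H i).verts ∧ t ∈ (H i).verts) ∧
      Pairwise fun i j => Disjoint (H i).edgeSet (H j).edgeSet := by
  obtain ⟨φ, hφ, hval⟩ := exists_isUnitFlow_le_netOut hst hcut
  obtain ⟨H, hH, hdisj⟩ := hφ.exists_edgeDisjoint_subgraphs hst hval
  exact ⟨H, fun i => ⟨(hH i).1, (hH i).2.1, (hH i).2.2.1⟩, hdisj⟩

end UnitFlow

lemma Subgraph.Connected.sStrongSub {H : G.Subgraph} (hH : H.Connected) {S : Set V}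
    (hS : S ⊆ H.verts) :
    SStrongSub {p : V × V | G.Adj p.1 p.2} S H.verts {p | H.Adj p.1 p.2} := by
  refine ⟨fun p hp => hp.adj_sub, hS, fun p hp => ⟨H.edge_vert hp, H.edge_vert hp.symm⟩,
    fun x hx y hy => ?_⟩
  have hxy := (reachable_iff_reflTransGen _ _).1 (hH.preconnected ⟨x, hx⟩ ⟨y, hy⟩)
  exact hxy.lift Subtype.val fun _ _ h => h

lemma le_lamS_of_connected [Finite V] {S : Set V} {a b : V} (ha : a ∈ S) (hb : b ∈ S)
    (hab : a ≠ b) {t : ℕ} (H : Fin t → G.Subgraph)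
    (hH : ∀ i, (H i).Connected ∧ S ⊆ (H i).verts)
    (hdisj : Pairwise fun i j => Disjoint (H i).edgeSet (H j).edgeSet) :
    t ≤ lamS {p : V × V | G.Adj p.1 p.2} S :=
  le_lamS ha hb hab (fun i => (hH i).1.sStrongSub (hH i).2) fun _ _ hij =>
    Set.disjoint_left.2 fun _ hi hj =>
      Set.disjoint_left.1 (hdisj hij) (Subgraph.mem_edgeSet.2 hi) (Subgraph.mem_edgeSet.2 hj)

lemma lamS_le_card_of_not_reachable [Finite V] {u v : V} (F : Finset (Sym2 V))
    (huv : ¬(G.deleteEdges ↑F).Reachable u v) :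
    lamS {p : V × V | G.Adj p.1 p.2} {u, v} ≤ F.card := by
  set X := {x | (G.deleteEdges ↑F).Reachable u x}
  refine (lamS_le_ncard (S := {u, v}) (X := X) (Set.mem_insert u _) (Reachable.refl u)
    (Set.mem_insert_of_mem u (Set.mem_singleton v)) huv).trans ?_
  rw [← Set.ncard_coe_finset]
  refine Set.ncard_le_ncard_of_injOn (fun q => s(q.1, q.2)) ?_ ?_
  · rintro ⟨x, y⟩ ⟨hxy, hx, hy⟩
    by_contra hF
    exact hy (hx.trans (Adj.reachable ((deleteEdges_adj ..).2 ⟨hxy, hF⟩)))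
  · rintro ⟨x, y⟩ ⟨-, hx, hy⟩ ⟨x', y'⟩ ⟨-, hx', hy'⟩ h
    rcases Sym2.eq_iff.1 h with ⟨rfl, rfl⟩ | ⟨rfl, rfl⟩
    · rfl
    · exact absurd hx' hy

lemma treeLamS_le_lamS [Finite V] {S : Set V} (hS : ∃ a ∈ S, ∃ b ∈ S, a ≠ b) :
    treeLamS G S ≤ lamS {p : V × V | G.Adj p.1 p.2} S := by
  obtain ⟨a, ha, b, hb, hab⟩ := hS
  refine csSup_le ⟨0, Fin.elim0, fun i => i.elim0, fun i => i.elim0⟩ ?_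
  rintro _ ⟨H, hH, hdisj⟩
  exact le_lamS_of_connected ha hb hab H (fun i => ⟨⟨(hH i).2.connected⟩, (hH i).1⟩) hdisj

lemma treeLamK_le_lamK [Fintype V] {k : ℕ} (hk : 2 ≤ k) :
    treeLamK G k ≤ lamK {p : V × V | G.Adj p.1 p.2} k :=
  Nat.sInf_le_sInf_of_forall_le fun _ hS => treeLamS_le_lamS (Finset.one_lt_card.1 (by omega))

lemma edgeConn_eq_zero [Fintype V] [Subsingleton V] : edgeConn G = 0 := by
  rw [edgeConn, Nat.sInf_eq_zero]
  rcases isEmpty_or_nonempty V with hV | hV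
  · exact Or.inl ⟨∅, by simp, rfl, fun h => hV.false h.nonempty.some⟩
  · exact Or.inr (Set.eq_empty_of_forall_notMem fun _ ⟨_, _, _, h⟩ => h .of_subsingleton)

lemma lamK_two_eq_zero [Fintype V] [Subsingleton V] (A : Set (V × V)) : lamK A 2 = 0 := by
  rw [lamK, Nat.sInf_eq_zero]
  refine Or.inr (Set.eq_empty_of_forall_notMem fun _ ⟨S, hS, _⟩ => ?_)
  have := Finset.card_le_one_of_subsingleton S
  omega

lemma edgeConn_le_card [Fintype V] {F : Finset (Sym2 V)} (hFG : ↑F ⊆ G.edgeSet) {u v : V}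
    (huv : ¬(G.deleteEdges ↑F).Reachable u v) : edgeConn G ≤ F.card :=
  Nat.sInf_le ⟨F, hFG, rfl, fun hc => huv (hc.preconnected u v)⟩

lemma exists_card_eq_edgeConn [Fintype V] [Nontrivial V] :
    ∃ F : Finset (Sym2 V), ∃ u v, ¬(G.deleteEdges ↑F).Reachable u v ∧ F.card = edgeConn G := by
  classical
  have hne : {m | ∃ F : Finset (Sym2 V), ↑F ⊆ G.edgeSet ∧ F.card = m ∧
      ¬(G.deleteEdges ↑F).Connected}.Nonempty := by
    refine ⟨_, G.edgeFinset, by simp, rfl, fun h => not_preconnected_bot (V := V) ?_⟩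
    simpa using h.preconnected
  obtain ⟨F, -, hF, hnc⟩ := Nat.sInf_mem hne
  obtain ⟨u, v, huv⟩ : ∃ u v, ¬(G.deleteEdges ↑F).Reachable u v := by
    by_contra! h
    exact hnc ⟨h⟩
  exact ⟨F, u, v, huv, hF⟩

lemma edgeConn_le_lamS [Fintype V] {u v : V} (huv : u ≠ v) :
    edgeConn G ≤ lamS {p : V × V | G.Adj p.1 p.2} {u, v} := by
  obtain ⟨H, hH, hdisj⟩ := exists_edgeDisjoint_connected_subgraphs (G := G) huv
    fun _ hFG hF => edgeConn_le_card hFG hF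
  exact le_lamS_of_connected (Set.mem_insert u _) (Set.mem_insert_of_mem u (Set.mem_singleton v))
    huv H (fun i => ⟨(hH i).1, Set.pair_subset (hH i).2.1 (hH i).2.2⟩) hdisj

lemma lamK_two_eq_edgeConn [Fintype V] : lamK {p : V × V | G.Adj p.1 p.2} 2 = edgeConn G := by
  rcases subsingleton_or_nontrivial V with hV | hV
  · rw [lamK_two_eq_zero, edgeConn_eq_zero]
  refine le_antisymm ?_ ?_
  · obtain ⟨F, u, v, huv, hF⟩ := exists_card_eq_edgeConn (G := G)
    have hne : u ≠ v := by
      rintro rfl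
      exact huv .rfl
    classical
    calc lamK {p : V × V | G.Adj p.1 p.2} 2
        ≤ lamS {p : V × V | G.Adj p.1 p.2} ↑({u, v} : Finset V) :=
          Nat.sInf_le ⟨{u, v}, Finset.card_pair hne, rfl⟩
      _ ≤ F.card := by
          rw [Finset.coe_pair]
          exact lamS_le_card_of_not_reachable F huv
      _ = edgeConn G := hF
  · classical
    obtain ⟨u, v, huv⟩ := exists_pair_ne V
    refine le_csInf ⟨_, {u, v}, Finset.card_pair huv, rfl⟩ ?_
    rintro _ ⟨S, hS, rfl⟩
    obtain ⟨x, y, hxy, rfl⟩ := Finset.card_eq_two.1 hS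
    rw [Finset.coe_pair]
    exact edgeConn_le_lamS hxy

end SimpleGraph

/-- For every graph `G` and `k ≥ 2`, `λ_k(G⃡) ≥ λ_k(G)`;
in particular `λ_2(G⃡) = λ(G)`. -/
theorem lamK_symmetric_ge {V : Type*} [Fintype V] (G : SimpleGraph V)
    (k : ℕ) (h2 : 2 ≤ k) :
    treeLamK G k ≤ lamK {p : V × V | G.Adj p.1 p.2} k ∧
    lamK {p : V × V | G.Adj p.1 p.2} 2 = edgeConn G :=
  ⟨G.treeLamK_le_lamK h2, G.lamK_two_eq_edgeConn⟩
end

section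
/- For any digraph D of order n and integer k with 2 ≤ k ≤ n and n ≥ κ(D) + k, one has κ_k(D) ≤ κ(D), where κ(D) is the vertex-strong connectivity of D. -/
/-!
Take a minimum vertex cut `U` of `D`, so `|U| = κ(D)`. Since at least `k ≥ 2` vertices remain,
`D - U` is not strong: some `v` is unreachable from some `u` in `D - U`. Extend `{u, v}` to a
`k`-set `S` avoiding `U`. Every `S`-strong subgraph contains a `u`–`v` path, which must pass
through `U`; internally disjoint `S`-strong subgraphs share only vertices of `S`, so they meet `U`
in distinct vertices. Hence `κ_k(D) ≤ κ_S(D) ≤ |U| = κ(D)`.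
-/

open Relation Set

variable {V : Type*}

/-- Strong connectivity of the subdigraph induced on a vertex set `W`. -/
def StrongWithin {V : Type*} (A : Set (V × V)) (W : Set V) : Prop :=
  ∀ u ∈ W, ∀ v ∈ W,
    Relation.ReflTransGen (fun x y => x ∈ W ∧ y ∈ W ∧ (x, y) ∈ A) u v

/-- The vertex-strong connectivity `κ(D)` of a digraph: the minimum number of
vertices whose removal leaves a non-strong digraph or at most one vertex. -/
noncomputable def digraphVertConn {V : Type*} [Fintype V] (A : Set (V × V)) : ℕ :=
  sInf {m | ∃ U : Finset V, U.card = m ∧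
    (¬ StrongWithin A ((↑U : Set V)ᶜ) ∨ ((↑U : Set V)ᶜ).ncard ≤ 1)}

theorem ArcReach.reflTransGen_induced {A B : Set (V × V)} {X : Set V} (hBA : B ⊆ A)
    (hBX : ∀ e ∈ B, e.1 ∈ X ∧ e.2 ∈ X) {u v : V} (h : ArcReach B u v) :
    ReflTransGen (fun x y => x ∈ X ∧ y ∈ X ∧ (x, y) ∈ A) u v :=
  ReflTransGen.mono (fun _ _ hxy => ⟨(hBX _ hxy).1, (hBX _ hxy).2, hBA hxy⟩) _ _ h

theorem SStrongSub.exists_mem_notMem_of_not_reflTransGen {A B : Set (V × V)} {S W X : Set V}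
    (hsub : SStrongSub A S W B) {u v : V} (hu : u ∈ S) (hv : v ∈ S)
    (hsep : ¬ ReflTransGen (fun x y => x ∈ X ∧ y ∈ X ∧ (x, y) ∈ A) u v) :
    ∃ w ∈ W, w ∉ X := by
  obtain ⟨hBA, hSW, hBW, hreach⟩ := hsub
  by_contra! hWX
  exact hsep <| ArcReach.reflTransGen_induced hBA
    (fun e he => ⟨hWX _ (hBW e he).1, hWX _ (hBW e he).2⟩) (hreach u (hSW hu) v (hSW hv))

theorem kapS_le_card_of_separates {A : Set (V × V)} {S : Set V} (U : Finset V)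
    (hSU : Disjoint S ↑U) {u v : V} (hu : u ∈ S) (hv : v ∈ S)
    (hsep : ¬ ReflTransGen (fun x y => x ∈ (↑U : Set V)ᶜ ∧ y ∈ (↑U : Set V)ᶜ ∧ (x, y) ∈ A) u v) :
    kapS A S ≤ U.card := by
  refine csSup_le' ?_
  rintro t ⟨W, B, hsub, -, hmeet⟩
  have hcut (i : Fin t) : ∃ w ∈ W i, w ∈ U := by
    simpa using (hsub i).exists_mem_notMem_of_not_reflTransGen hu hv hsep
  choose f hfW hfU using hcut
  have hinj : Function.Injective fun i => (⟨f i, hfU i⟩ : U) := by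
    intro i j hij
    by_contra hne
    have hfij : f i = f j := congrArg Subtype.val hij
    have hfS : f i ∈ S := hmeet i j hne ▸ ⟨hfW i, hfij ▸ hfW j⟩
    exact hSU.notMem_of_mem_left hfS (hfU i)
  simpa using Fintype.card_le_of_injective _ hinj

theorem exists_separator_card_eq_digraphVertConn [Fintype V] (A : Set (V × V))
    (h : digraphVertConn A + 2 ≤ Fintype.card V) :
    ∃ U : Finset V, U.card = digraphVertConn A ∧ ∃ u ∉ U, ∃ v ∉ U,
      ¬ ReflTransGen (fun x y => x ∈ (↑U : Set V)ᶜ ∧ y ∈ (↑U : Set V)ᶜ ∧ (x, y) ∈ A) u v := by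
  classical
  obtain ⟨U, hUcard, hcut⟩ := Nat.sInf_mem (s := {m | ∃ U : Finset V, U.card = m ∧
      (¬ StrongWithin A ((↑U : Set V)ᶜ) ∨ ((↑U : Set V)ᶜ).ncard ≤ 1)})
    ⟨_, Finset.univ, rfl, Or.inr (by simp)⟩
  have hcompl : ((↑U : Set V)ᶜ).ncard = Fintype.card V - digraphVertConn A := by
    rw [← Finset.coe_compl, Set.ncard_coe_finset, Finset.card_compl, hUcard, digraphVertConn]
  have hnot : ¬ StrongWithin A ((↑U : Set V)ᶜ) := hcut.resolve_right (by omega)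
  simp only [StrongWithin, not_forall] at hnot
  obtain ⟨u, hu, v, hv, hsep⟩ := hnot
  exact ⟨U, hUcard, u, hu, v, hv, hsep⟩

theorem kapK_le_vertConn_general {V : Type*} [Fintype V] (A : Set (V × V)) (n k : ℕ)
    (hn : Fintype.card V = n) (h2 : 2 ≤ k)
    (h : digraphVertConn A + k ≤ n) :
    kapK A k ≤ digraphVertConn A := by
  classical
  obtain ⟨U, hUcard, u, hu, v, hv, hsep⟩ :=
    exists_separator_card_eq_digraphVertConn A (by omega)
  have huv : {u, v} ⊆ Uᶜ := by simp [Finset.insert_subset_iff, hu, hv]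
  obtain ⟨S, huvS, hSU, hScard⟩ := Finset.exists_subsuperset_card_eq huv
    (Finset.card_le_two.trans h2) (by rw [Finset.card_compl]; omega)
  calc kapK A k ≤ kapS A ↑S := Nat.sInf_le ⟨S, hScard, rfl⟩
    _ ≤ U.card := kapS_le_card_of_separates U
        (Finset.disjoint_coe.mpr (Finset.subset_compl_iff_disjoint_right.mp hSU))
        (by simpa using huvS (by simp)) (by simpa using huvS (by simp)) hsep
    _ = digraphVertConn A := hUcard

/-- For `2 ≤ k ≤ n` and `n ≥ κ(D) + k`, `κ_k(D) ≤ κ(D)`. -/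
theorem kapK_le_vertConn {V : Type*} [Fintype V] (A : Set (V × V)) (n k : ℕ)
    (hn : Fintype.card V = n) (h2 : 2 ≤ k) (hk : k ≤ n)
    (h : digraphVertConn A + k ≤ n) :
    kapK A k ≤ digraphVertConn A :=
  kapK_le_vertConn_general A n k hn h2 h
end

section
/- A digraph is weakly q-linked if and only if it is q-arc-strongly connected (Shiloach's theorem). -/
open Relation Set

variable {V : Type*}

/-- A digraph is weakly `q`-linked: for every choice of (not necessarily
distinct) sources and sinks there are `q` pairwise arc-disjoint connecting
paths (given by pairwise disjoint arc sets realizing the connections). -/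
def WeaklyQLinked {V : Type*} (A : Set (V × V)) (q : ℕ) : Prop :=
  ∀ s t : Fin q → V, ∃ B : Fin q → Set (V × V),
    (∀ i, B i ⊆ A) ∧ (∀ i j, i ≠ j → Disjoint (B i) (B j)) ∧
    ∀ i, ArcReach (B i) (s i) (t i)

/-- A digraph is `q`-arc-strong: it stays strong after deleting fewer than
`q` arcs. -/
def ArcStrong {V : Type*} (A : Set (V × V)) (q : ℕ) : Prop :=
  ∀ F : Finset (V × V), F.card < q → IsStrong (A \ ↑F)

/-!
The easy direction is pigeonhole: of `q` arc-disjoint `u`-`v` paths, one avoids any `< q`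
deleted arcs. For the converse, add a root joined by one arc to each source `s i`. Arc-strength
makes every nonempty set of old vertices entered by at least `q` arcs, so by Edmonds' branching
theorem the extended graph has `q` arc-disjoint arc sets, each reaching every vertex from the root.
Each of them must use exactly one of the `q` root arcs, and the branching that uses the arc to
`s j` contains an `s j`-`t j` path. Edmonds' theorem is proved by Lovász's argument: one branching
is grown arc by arc, always adding an arc that enters no set whose in-degree in the remaining arcs
is already critical; such an arc exists by submodularity of the in-degree.
-/

open Finset Function
open scoped Classical

theorem Fin.pairwise_disjoint_cons {α : Type*} [PartialOrder α] [OrderBot α] {n : ℕ} {a : α}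
    {f : Fin n → α} (ha : ∀ i, Disjoint a (f i)) (hf : Pairwise (Disjoint on f)) :
    Pairwise (Disjoint on (Fin.cons a f : Fin (n + 1) → α)) := by
  intro i j hij
  induction i using Fin.cases <;> induction j using Fin.cases
  · exact absurd rfl hij
  · simpa [Function.onFun] using ha _
  · simpa [Function.onFun] using (ha _).symm
  · simpa [Function.onFun] using hf (ne_of_apply_ne Fin.succ hij)

structure Multidigraph (W E : Type*) where
  tail : E → W
  head : E → W

namespace Multidigraph

variable {W E : Type*} (G : Multidigraph W E)

def MReach (B : Finset E) : W → W → Prop :=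
  ReflTransGen fun x y => ∃ e ∈ B, G.tail e = x ∧ G.head e = y

noncomputable def entering (B : Finset E) (X : Finset W) : Finset E :=
  B.filter fun e => G.head e ∈ X ∧ G.tail e ∉ X

def IsArcConnFrom (A : Finset E) (r : W) (k : ℕ) : Prop :=
  ∀ X : Finset W, X.Nonempty → r ∉ X → k ≤ #(G.entering A X)

def IsTight (C : Finset E) (r : W) (k : ℕ) (X : Finset W) : Prop :=
  r ∉ X ∧ #(G.entering C X) ≤ k

variable {G}

theorem MReach.mono {B B' : Finset E} (h : B ⊆ B') {x y : W} (hxy : G.MReach B x y) :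
    G.MReach B' x y :=
  ReflTransGen.mono (fun _ _ ⟨e, he, hte⟩ => ⟨e, h he, hte⟩) _ _ hxy

theorem IsArcConnFrom.mono {A : Finset E} {r : W} {k k' : ℕ} (hA : G.IsArcConnFrom A r k)
    (hk : k' ≤ k) : G.IsArcConnFrom A r k' :=
  fun X hX hr => hk.trans (hA X hX hr)

theorem card_entering_inter_add_card_entering_union_le (B : Finset E) (X Y : Finset W) :
    #(G.entering B (X ∩ Y)) + #(G.entering B (X ∪ Y)) ≤
      #(G.entering B X) + #(G.entering B Y) := by
  rw [← card_union_add_card_inter (G.entering B X), ← card_union_add_card_inter]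
  apply add_le_add <;> apply Finset.card_le_card <;> intro e <;>
    simp only [entering, Finset.mem_union, Finset.mem_inter, mem_filter] <;> tauto

theorem IsTight.inter {C : Finset E} {r : W} {k : ℕ} {X Y : Finset W}
    (hX : G.IsTight C r k X) (hY : G.IsTight C r k Y) (hC : G.IsArcConnFrom C r k)
    (hXY : (X ∩ Y).Nonempty) : G.IsTight C r k (X ∩ Y) := by
  have hunion := hC (X ∪ Y) (hXY.mono inter_subset_union) (by simp [hX.1, hY.1])
  have hsubmod := G.card_entering_inter_add_card_entering_union_le C X Y
  exact ⟨fun h => hX.1 (Finset.mem_inter.1 h).1, by linarith [hX.2, hY.2]⟩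

theorem entering_sdiff_of_forall_not_mReach {A B : Finset E} {r : W} {X : Finset W}
    (hroot : ∀ e ∈ B, G.MReach B r (G.head e)) (hX : ∀ w ∈ X, ¬ G.MReach B r w) :
    G.entering (A \ B) X = G.entering A X := by
  ext e
  simp only [entering, mem_filter, Finset.mem_sdiff]
  exact ⟨fun ⟨⟨he, _⟩, hcross⟩ => ⟨he, hcross⟩,
    fun ⟨he, hcross⟩ => ⟨⟨he, fun heB => hX _ hcross.1 (hroot e heB)⟩, hcross⟩⟩

theorem IsArcConnFrom.erase {C : Finset E} {r : W} {k : ℕ} {e : E}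
    (hC : G.IsArcConnFrom C r k)
    (he : ∀ X, G.IsTight C r k X → G.head e ∈ X → G.tail e ∈ X) :
    G.IsArcConnFrom (C.erase e) r k := by
  intro X hX hrX
  have herase : G.entering (C.erase e) X = (G.entering C X).erase e := filter_erase _ _ _
  by_cases hcross : G.head e ∈ X ∧ G.tail e ∉ X
  · have : k + 1 ≤ #(G.entering C X) := by
      by_contra! hlt
      exact hcross.2 (he X ⟨hrX, by omega⟩ hcross.1)
    have := pred_card_le_card_erase (s := G.entering C X) (a := e)
    rw [herase]
    omega
  · have hnot : e ∉ G.entering C X := fun hmem => hcross (mem_filter.1 hmem).2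
    rw [herase, erase_eq_of_notMem hnot]
    exact hC X hX hrX

variable [Fintype W]

theorem exists_safe_arc {A B : Finset E} {r : W} {k : ℕ} (hA : G.IsArcConnFrom A r (k + 1))
    (hroot : ∀ e ∈ B, G.MReach B r (G.head e)) (hres : G.IsArcConnFrom (A \ B) r k)
    (hw : ∃ w, ¬ G.MReach B r w) :
    ∃ e ∈ A \ B, G.MReach B r (G.tail e) ∧ ¬ G.MReach B r (G.head e) ∧
      ∀ X, G.IsTight (A \ B) r k X → G.head e ∈ X → G.tail e ∈ X := by
  by_contra! hno
  set S := univ.filter fun w => ¬ G.MReach B r w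
  have hmemS : ∀ w, w ∈ S ↔ ¬ G.MReach B r w := by simp [S]
  have hS : ∀ X ⊆ S, X.Nonempty → k + 1 ≤ #(G.entering (A \ B) X) := by
    intro X hXS hX
    have hXS' : ∀ w ∈ X, ¬ G.MReach B r w := fun w hw => (hmemS w).1 (hXS hw)
    rw [entering_sdiff_of_forall_not_mReach hroot hXS']
    exact hA X hX fun hr => hXS' r hr .refl
  set T := (univ : Finset (Finset W)).filter fun X => G.IsTight (A \ B) r k X ∧ (X ∩ S).Nonempty
  have hT : T.Nonempty := by
    obtain ⟨w, hw⟩ := hw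
    have hcard := hS S subset_rfl ⟨w, (hmemS w).2 hw⟩
    obtain ⟨e, he⟩ := card_pos.1 (by omega : 0 < #(G.entering (A \ B) S))
    simp only [entering, mem_filter, hmemS, not_not] at he
    obtain ⟨X, hX, hh, -⟩ := hno e he.1 he.2.2 he.2.1
    exact ⟨X, mem_filter.2
      ⟨Finset.mem_univ _, hX, _, Finset.mem_inter.2 ⟨hh, (hmemS _).2 he.2.1⟩⟩⟩
  -- A smallest tight set `M` meeting `S` is entered by every arc entering `M ∩ S`, since an arc
  -- from `M \ S` would cut a smaller tight set out of `M`; but `M ∩ S` has `k + 1` entering arcs.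
  obtain ⟨M, hMT, hMmin⟩ := Finset.exists_min_image T card hT
  obtain ⟨hM, hMS⟩ := (mem_filter.1 hMT).2
  have hsub : G.entering (A \ B) (M ∩ S) ⊆ G.entering (A \ B) M := by
    intro e he
    simp only [entering, mem_filter, Finset.mem_inter, hmemS, not_and, not_not] at he ⊢
    refine ⟨he.1, he.2.1.1, fun htM => ?_⟩
    obtain ⟨X, hX, hhX, htX⟩ := hno e he.1 (he.2.2 htM) he.2.1.2
    have hhMX : G.head e ∈ M ∩ X := Finset.mem_inter.2 ⟨he.2.1.1, hhX⟩
    have hMX : M ∩ X ∈ T := mem_filter.2 ⟨Finset.mem_univ _, hM.inter hX hres ⟨_, hhMX⟩,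
      _, Finset.mem_inter.2 ⟨hhMX, (hmemS _).2 he.2.1.2⟩⟩
    have hsmaller : M ∩ X ⊂ M :=
      ⟨Finset.inter_subset_left, fun h => htX (Finset.mem_inter.1 (h htM)).2⟩
    exact (hMmin _ hMX).not_gt (Finset.card_lt_card hsmaller)
  have hMk := hM.2
  have := (hS _ Finset.inter_subset_right hMS).trans (Finset.card_le_card hsub)
  omega

theorem exists_spanning_of_rooted {A : Finset E} {r : W} {k : ℕ}
    (hA : G.IsArcConnFrom A r (k + 1)) {B : Finset E} (hBA : B ⊆ A)
    (hroot : ∀ e ∈ B, G.MReach B r (G.head e)) (hres : G.IsArcConnFrom (A \ B) r k) :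
    ∃ B' ⊆ A, (∀ w, G.MReach B' r w) ∧ G.IsArcConnFrom (A \ B') r k := by
  induction hn : #(A \ B) using Nat.strong_induction_on generalizing B with
  | _ n ih =>
    by_cases hall : ∀ w, G.MReach B r w
    · exact ⟨B, hBA, hall, hres⟩
    obtain ⟨e, heAB, htail, -, hsafe⟩ := exists_safe_arc hA hroot hres (not_forall.1 hall)
    have hsub : B ⊆ insert e B := Finset.subset_insert e B
    have hhead : G.MReach (insert e B) r (G.head e) :=
      (htail.mono hsub).tail ⟨e, mem_insert_self e B, rfl, rfl⟩
    refine ih _ ?_ (Finset.insert_subset (Finset.mem_sdiff.1 heAB).1 hBA) ?_ ?_ rfl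
    · rw [sdiff_insert, ← hn]
      exact card_erase_lt_of_mem heAB
    · intro e' he'
      rcases Finset.mem_insert.1 he' with rfl | h
      · exact hhead
      · exact (hroot e' h).mono hsub
    · rw [sdiff_insert]
      exact hres.erase hsafe

theorem exists_disjoint_spanning {r : W} :
    ∀ {k : ℕ} {A : Finset E}, G.IsArcConnFrom A r k →
      ∃ B : Fin k → Finset E, (∀ i, B i ⊆ A) ∧ Pairwise (Disjoint on B) ∧
        ∀ i w, G.MReach (B i) r w
  | 0, _, _ => ⟨Fin.elim0, fun i => i.elim0, fun i => i.elim0, fun i => i.elim0⟩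
  | k + 1, A, hA => by
    obtain ⟨B₀, hB₀A, hB₀, hres⟩ := exists_spanning_of_rooted hA (Finset.empty_subset A)
      (by simp) (by simpa using hA.mono k.le_succ)
    obtain ⟨B, hBA, hB, hBspan⟩ := exists_disjoint_spanning hres
    refine ⟨Fin.cons B₀ B, Fin.cases hB₀A fun i => (hBA i).trans Finset.sdiff_subset,
      Fin.pairwise_disjoint_cons (fun i => disjoint_sdiff.mono_right (hBA i)) hB,
      Fin.cases hB₀ hBspan⟩

end Multidigraph

theorem ArcReach.mono {B B' : Set (V × V)} (h : B ⊆ B') {u v : V} (huv : ArcReach B u v) :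
    ArcReach B' u v :=
  ReflTransGen.mono (fun _ _ hab => h hab) _ _ huv

theorem ArcReach.exists_arc_enter {B : Set (V × V)} {X : Set V} {u v : V}
    (huv : ArcReach B u v) (hu : u ∉ X) (hv : v ∈ X) :
    ∃ p ∈ B, p.1 ∉ X ∧ p.2 ∈ X := by
  induction huv with
  | refl => exact absurd hv hu
  | @tail b c _ hbc ih =>
    by_cases hb : b ∈ X
    · exact ih hb
    · exact ⟨(b, c), hbc, hb, hv⟩

theorem WeaklyQLinked.arcStrong {A : Set (V × V)} {q : ℕ} (h : WeaklyQLinked A q) :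
    ArcStrong A q := by
  intro F hF u v
  obtain ⟨B, hBA, hB, hreach⟩ := h (fun _ => u) (fun _ => v)
  obtain ⟨i, hi⟩ : ∃ i, Disjoint (B i) F := by
    by_contra! hmeet
    choose f hfB hfF using fun i => Set.not_disjoint_iff.1 (hmeet i)
    obtain ⟨i, -, j, -, hij, hf⟩ := exists_ne_map_eq_of_card_lt_of_maps_to (s := univ) (t := F)
      (by simpa using hF) fun i _ => hfF i
    exact Set.disjoint_left.1 (hB i j hij) (hfB i) (hf ▸ hfB j)
  exact (hreach i).mono fun p hp => Set.mem_sdiff_of_mem (hBA i hp) (Set.disjoint_left.1 hi hp)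

theorem ArcStrong.le_card_entering [Fintype V] {A : Set (V × V)} {q : ℕ} (hA : ArcStrong A q)
    {X : Set V} [DecidablePred (· ∈ X)] {u v : V} (hu : u ∉ X) (hv : v ∈ X) :
    q ≤ #(A.toFinset.filter fun p => p.2 ∈ X ∧ p.1 ∉ X) := by
  by_contra! hlt
  obtain ⟨p, ⟨hpA, hpF⟩, hp1, hp2⟩ := (hA _ hlt u v).exists_arc_enter hu hv
  exact hpF (by simp [hpA, hp1, hp2])

/-- `none` is the new root, `Sum.inr i` the arc from it to `s i`, and `Sum.inl p` the arc `p`. -/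
def extendByRoot {q : ℕ} (s : Fin q → V) : Multidigraph (Option V) ((V × V) ⊕ Fin q) where
  tail := Sum.elim (fun p => some p.1) fun _ => none
  head := Sum.elim (fun p => some p.2) fun i => some (s i)

theorem ArcStrong.isArcConnFrom_extendByRoot [Fintype V] {A : Set (V × V)} {q : ℕ}
    (hA : ArcStrong A q) (s : Fin q → V) :
    (extendByRoot s).IsArcConnFrom (A.toFinset.disjSum univ) none q := by
  intro X hX hr
  have hsplit : (extendByRoot s).entering (A.toFinset.disjSum univ) X =
      (A.toFinset.filter fun p => p.2 ∈ {v | some v ∈ X} ∧ p.1 ∉ {v | some v ∈ X}).disjSum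
        (univ.filter fun i => some (s i) ∈ X) := by
    ext (p | i) <;> simp only [Multidigraph.entering, mem_filter] <;> simp [extendByRoot, hr]
  rw [hsplit, card_disjSum]
  by_cases hall : ∀ v, some v ∈ X
  · simp [hall]
  · obtain ⟨u, hu⟩ := not_forall.1 hall
    obtain ⟨_ | v, hv⟩ := hX
    · exact absurd hv hr
    · exact (hA.le_card_entering (X := {v | some v ∈ X}) hu hv).trans le_self_add

theorem arcReach_of_mReach_extendByRoot {q : ℕ} {s : Fin q → V}
    {B : Finset ((V × V) ⊕ Fin q)} {a : V} {y : Option V}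
    (h : (extendByRoot s).MReach B (some a) y) :
    ∃ b, y = some b ∧ ArcReach {p | Sum.inl p ∈ B} a b := by
  induction h with
  | refl => exact ⟨a, rfl, .refl⟩
  | tail _ hstep ih =>
    obtain ⟨b, rfl, hab⟩ := ih
    obtain ⟨(⟨b', c⟩ | i), he, htl, rfl⟩ := hstep
    · cases htl
      exact ⟨c, rfl, hab.tail he⟩
    · cases htl

theorem exists_root_arc_of_mReach_extendByRoot {q : ℕ} {s : Fin q → V}
    {B : Finset ((V × V) ⊕ Fin q)} {v : V} (h : (extendByRoot s).MReach B none (some v)) :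
    ∃ i, Sum.inr i ∈ B ∧ ArcReach {p | Sum.inl p ∈ B} (s i) v := by
  obtain h | ⟨c, ⟨(p | i), he, htl, rfl⟩, hc⟩ := h.cases_head
  · cases h
  · cases htl
  · obtain ⟨b, hb, hsb⟩ := arcReach_of_mReach_extendByRoot hc
    cases hb
    exact ⟨i, he, hsb⟩

theorem ArcStrong.weaklyQLinked [Fintype V] {A : Set (V × V)} {q : ℕ} (hA : ArcStrong A q) :
    WeaklyQLinked A q := by
  intro s t
  obtain ⟨B, hBA, hB, hspan⟩ :=
    (extendByRoot s).exists_disjoint_spanning (hA.isArcConnFrom_extendByRoot s)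
  choose ψ hψ using fun i => (exists_root_arc_of_mReach_extendByRoot (hspan i (some (t i)))).imp
    fun _ h => h.1
  have hψ_inj : Injective ψ := fun i j hij => by
    by_contra hne
    exact disjoint_left.1 (hB hne) (hψ i) (hij ▸ hψ j)
  let σ := Equiv.ofBijective ψ (Finite.injective_iff_bijective.1 hψ_inj)
  -- the root arcs are shared out bijectively, so each `B i` contains exactly one of them
  have hroot_unique : ∀ i j, Sum.inr j ∈ B i → j = ψ i := by
    intro i j hj
    obtain ⟨i', rfl⟩ := σ.surjective j
    by_contra hne
    exact disjoint_left.1 (hB fun h => hne (by rw [h]; rfl)) (hψ i') hj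
  refine ⟨fun j => {p | Sum.inl p ∈ B (σ.symm j)}, fun j p hp => by simpa using hBA _ hp,
    fun j j' hjj' => Set.disjoint_left.2 fun p hp hp' => ?_, fun j => ?_⟩
  · exact disjoint_left.1 (hB (σ.symm.injective.ne hjj')) hp hp'
  · obtain ⟨k, hk, hreach⟩ :=
      exists_root_arc_of_mReach_extendByRoot (hspan (σ.symm j) (some (t j)))
    obtain rfl : k = j := (hroot_unique _ _ hk).trans (σ.apply_symm_apply j)
    exact hreach

/-- Shiloach's theorem: a digraph is weakly `q`-linked iff it
is `q`-arc-strong. -/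
theorem weaklyQLinked_iff_arcStrong {V : Type*} [Fintype V]
    (A : Set (V × V)) (q : ℕ) :
    WeaklyQLinked A q ↔ ArcStrong A q :=
  ⟨WeaklyQLinked.arcStrong, ArcStrong.weaklyQLinked⟩
end
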